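/- Let {S_γ}_{γ∈Γ} be a family of finitely generated shift-invariant subspaces of L²(ℝⁿ), χ = ∪_{γ∈Γ} S_γ, and S̄_{γ,θ} the closure of S_γ + S_θ. Let Ψ = {ψ_i}_{i∈I} with I a finite index set be such that E(Ψ) is a Bessel sequence in L²(ℝⁿ), and let A : L²(ℝⁿ) → ℓ²(ℤⁿ×I), Af = {⟨f, t_kψ_i⟩}_{i∈I,k∈ℤⁿ}, be the associated sampling operator. If A is stable on χ, then #I ≥ len(S̄_{γ,θ}) for every γ,θ ∈ Γ, i.e. #I ≥ sup_{γ,θ∈Γ} len(S̄_{γ,θ}). -/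

import Mathlib

open MeasureTheory
open scoped ComplexInnerProductSpace

/-- The translation operator `t_k f = f(· − k)` by an integer vector `k ∈ ℤⁿ`,
acting on `L²(ℝⁿ)`. -/
noncomputable def tK {n : ℕ} (k : Fin n → ℤ) :
    Lp ℂ 2 (volume : Measure (Fin n → ℝ)) →+ Lp ℂ 2 (volume : Measure (Fin n → ℝ)) :=
  Lp.compMeasurePreserving (fun x : Fin n → ℝ => x - fun i => (k i : ℝ))
    (measurePreserving_sub_right volume _)

/-- The shift-invariant space `S(Φ)` generated by a set `Φ ⊆ L²(ℝⁿ)`: the closure of the span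
of `E(Φ) = {t_k φ : k ∈ ℤⁿ, φ ∈ Φ}`. -/
noncomputable def shiftSpace {n : ℕ} (Φ : Set (Lp ℂ 2 (volume : Measure (Fin n → ℝ)))) :
    Submodule ℂ (Lp ℂ 2 (volume : Measure (Fin n → ℝ))) :=
  (Submodule.span ℂ {g | ∃ φ ∈ Φ, ∃ k : Fin n → ℤ, g = tK k φ}).topologicalClosure

/-- The length of a finitely generated shift-invariant space: the minimal cardinality of a
finite generating set. -/
noncomputable def len {n : ℕ} (S : Submodule ℂ (Lp ℂ 2 (volume : Measure (Fin n → ℝ)))) : ℕ :=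
  sInf {m : ℕ | ∃ Φ : Set (Lp ℂ 2 (volume : Measure (Fin n → ℝ))),
    Φ.Finite ∧ Φ.ncard = m ∧ S = shiftSpace Φ}

open Module.End

/-!
Let `V` be the closure of `S γ + S θ`; it is a closed shift-invariant space. Writing
`a + b = a - (-b)` with `a ∈ S γ`, `-b ∈ S θ`, the lower stability bound holds on `S γ + S θ`, hence
on `V`, so no nonzero `y ∈ V` is orthogonal to every `t_k ψ_i`. Since `Vᗮ` is shift-invariant as
well, `⟪t_k ψ_i, y⟫ = ⟪t_k (P_V ψ_i), y⟫` for `y ∈ V`; hence the orthogonal complement in `V` of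
`S({P_V ψ_i})` is trivial, i.e. `V = S({P_V ψ_i}_{i ∈ I})` has at most `#I` generators.
-/

section ShiftInvariance

variable {n : ℕ}

local notation "L²(ℝ^" n ")" => Lp ℂ 2 (volume : Measure (Fin n → ℝ))

theorem tK_add (k m : Fin n → ℤ) (f : L²(ℝ^n)) : tK k (tK m f) = tK (k + m) f := by
  have hfun : (fun x : Fin n → ℝ => x - fun i => ((k + m) i : ℝ)) =
      (fun x => x - fun i => (m i : ℝ)) ∘ (fun x => x - fun i => (k i : ℝ)) := by
    funext x i; simp [sub_sub]
  simp only [tK]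
  rw [← Lp.compMeasurePreserving_comp_apply]
  simp only [hfun]

theorem tK_zero (f : L²(ℝ^n)) : tK 0 f = f := by
  have hfun : (fun x : Fin n → ℝ => x - fun i => ((0 : Fin n → ℤ) i : ℝ)) = id := by
    funext x i; simp
  simp only [tK, hfun, Lp.compMeasurePreserving_id_apply]

theorem tK_tK_neg (k : Fin n → ℤ) (f : L²(ℝ^n)) : tK k (tK (-k) f) = f := by
  rw [tK_add, add_neg_cancel, tK_zero]

noncomputable def tKₗᵢ (k : Fin n → ℤ) : L²(ℝ^n) →ₗᵢ[ℂ] L²(ℝ^n) :=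
  Lp.compMeasurePreservingₗᵢ ℂ (fun x : Fin n → ℝ => x - fun i => (k i : ℝ))
    (measurePreserving_sub_right volume _)

theorem inner_tK_tK (k : Fin n → ℤ) (f g : L²(ℝ^n)) : ⟪tK k f, tK k g⟫ = ⟪f, g⟫ :=
  (tKₗᵢ k).inner_map_map f g

def IsShiftInvariant (V : Submodule ℂ L²(ℝ^n)) : Prop :=
  ∀ k : Fin n → ℤ, V ∈ invtSubmodule ((tKₗᵢ k).toContinuousLinearMap : L²(ℝ^n) →ₗ[ℂ] L²(ℝ^n))

theorem IsShiftInvariant.tK_mem {V : Submodule ℂ L²(ℝ^n)} (hV : IsShiftInvariant V)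
    (k : Fin n → ℤ) {x : L²(ℝ^n)} (hx : x ∈ V) : tK k x ∈ V :=
  (mem_invtSubmodule_iff_forall_mem_of_mem _).1 (hV k) x hx

theorem isShiftInvariant_iff {V : Submodule ℂ L²(ℝ^n)} :
    IsShiftInvariant V ↔ ∀ (k : Fin n → ℤ), ∀ x ∈ V, tK k x ∈ V :=
  forall_congr' fun _ => mem_invtSubmodule_iff_forall_mem_of_mem _

theorem IsShiftInvariant.sup {V W : Submodule ℂ L²(ℝ^n)} (hV : IsShiftInvariant V)
    (hW : IsShiftInvariant W) : IsShiftInvariant (V ⊔ W) :=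
  fun k => invtSubmodule.sup_mem (hV k) (hW k)

theorem IsShiftInvariant.topologicalClosure {V : Submodule ℂ L²(ℝ^n)}
    (hV : IsShiftInvariant V) : IsShiftInvariant V.topologicalClosure :=
  fun k => V.topologicalClosure_mem_invtSubmodule (hV k)

theorem IsShiftInvariant.orthogonal {V : Submodule ℂ L²(ℝ^n)} (hV : IsShiftInvariant V) :
    IsShiftInvariant Vᗮ := by
  refine isShiftInvariant_iff.2 fun k x hx => (Submodule.mem_orthogonal _ _).2 fun w hw => ?_
  rw [← tK_tK_neg k w, inner_tK_tK]
  exact (Submodule.mem_orthogonal _ _).1 hx _ (hV.tK_mem (-k) hw)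

theorem isShiftInvariant_shiftSpace (Φ : Set L²(ℝ^n)) : IsShiftInvariant (shiftSpace Φ) := by
  refine IsShiftInvariant.topologicalClosure fun k => ?_
  rw [mem_invtSubmodule, Submodule.span_le]
  rintro _ ⟨φ, hφ, m, rfl⟩
  exact Submodule.subset_span ⟨φ, hφ, k + m, tK_add k m φ⟩

theorem IsShiftInvariant.eq_shiftSpace_range_starProjection {V : Submodule ℂ L²(ℝ^n)}
    [V.HasOrthogonalProjection] (hV : IsShiftInvariant V) {ι : Type*} (ψ : ι → L²(ℝ^n))
    (hsep : ∀ y ∈ V, (∀ k i, ⟪tK k (ψ i), y⟫ = 0) → y = 0) :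
    V = shiftSpace (Set.range fun i => V.starProjection (ψ i)) := by
  set W := shiftSpace (Set.range fun i => V.starProjection (ψ i))
  have hWV : W ≤ V := by
    refine Submodule.topologicalClosure_minimal _ ?_
      (V.orthogonal_orthogonal ▸ Vᗮ.isClosed_orthogonal)
    rw [Submodule.span_le]
    rintro _ ⟨_, ⟨i, rfl⟩, k, rfl⟩
    exact hV.tK_mem k (V.starProjection_apply_mem (ψ i))
  have : CompleteSpace W := (Submodule.isClosed_topologicalClosure _).completeSpace_coe
  have hWV_orth : Wᗮ ⊓ V = ⊥ := by
    refine (Submodule.eq_bot_iff _).2 fun y ⟨hyW, hyV⟩ => hsep y hyV fun k i => ?_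
    have hφ : tK k (V.starProjection (ψ i)) ∈ W :=
      Submodule.le_topologicalClosure _ (Submodule.subset_span ⟨_, ⟨i, rfl⟩, k, rfl⟩)
    have hres : tK k (ψ i - V.starProjection (ψ i)) ∈ Vᗮ :=
      hV.orthogonal.tK_mem k (V.sub_starProjection_mem_orthogonal (ψ i))
    calc ⟪tK k (ψ i), y⟫
        = ⟪tK k (ψ i - V.starProjection (ψ i)), y⟫ + ⟪tK k (V.starProjection (ψ i)), y⟫ := by
          rw [map_sub, inner_sub_left, sub_add_cancel]
      _ = 0 := by
          rw [Submodule.inner_left_of_mem_orthogonal hyV hres,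
            Submodule.inner_right_of_mem_orthogonal hφ hyW, add_zero]
  simpa [hWV_orth] using (Submodule.sup_orthogonal_inf_of_hasOrthogonalProjection hWV).symm

theorem len_shiftSpace_le {Φ : Set L²(ℝ^n)} (hΦ : Φ.Finite) : len (shiftSpace Φ) ≤ Φ.ncard :=
  Nat.sInf_le ⟨Φ, hΦ, rfl, rfl⟩

theorem len_shiftSpace_range_le {ι : Type*} [Fintype ι] (φ : ι → L²(ℝ^n)) :
    len (shiftSpace (Set.range φ)) ≤ Fintype.card ι := calc
  _ ≤ (Set.range φ).ncard := len_shiftSpace_le (Set.finite_range φ)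
  _ ≤ Fintype.card ι := by
    rw [← Nat.card_coe_set_eq, ← Nat.card_eq_fintype_card]
    exact Finite.card_range_le φ

end ShiftInvariance

section LowerBound

variable {𝕜 E F : Type*} [NormedField 𝕜] [SeminormedAddCommGroup E] [NormedSpace 𝕜 E]
  [SeminormedAddCommGroup F] [NormedSpace 𝕜 F] {α : ℝ}

theorem mul_sq_norm_le_of_mem_sup_of_stable (A : E →L[𝕜] F) {Γ : Type*} {S : Γ → Submodule 𝕜 E}
    (hstable : ∀ x₁ ∈ ⋃ γ, (S γ : Set E), ∀ x₂ ∈ ⋃ γ, (S γ : Set E),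
      α * ‖x₁ - x₂‖ ^ 2 ≤ ‖A x₁ - A x₂‖ ^ 2) (γ θ : Γ) :
    ∀ x ∈ S γ ⊔ S θ, α * ‖x‖ ^ 2 ≤ ‖A x‖ ^ 2 := by
  intro x hx
  obtain ⟨a, ha, b, hb, rfl⟩ := Submodule.mem_sup.1 hx
  simpa [← map_sub] using
    hstable a (Set.mem_iUnion_of_mem γ ha) (-b) (Set.mem_iUnion_of_mem θ (neg_mem hb))

theorem mul_sq_norm_le_of_mem_closure {A : E → F} (hA : Continuous A) {s : Set E}
    (hs : ∀ x ∈ s, α * ‖x‖ ^ 2 ≤ ‖A x‖ ^ 2) : ∀ x ∈ closure s, α * ‖x‖ ^ 2 ≤ ‖A x‖ ^ 2 :=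
  fun _ hx => closure_minimal hs
    (isClosed_le (continuous_const.mul (continuous_norm.pow 2)) (hA.norm.pow 2)) hx

end LowerBound

theorem stmt_18_general {n : ℕ}
    {Γ : Type*} (S : Γ → Submodule ℂ (Lp ℂ 2 (volume : Measure (Fin n → ℝ))))
    (hFSIS : ∀ γ : Γ, ∃ Φ : Set (Lp ℂ 2 (volume : Measure (Fin n → ℝ))),
      Φ.Finite ∧ S γ = shiftSpace Φ)
    {I : Type*} [Fintype I]
    (ψ : I → Lp ℂ 2 (volume : Measure (Fin n → ℝ)))
    (A : Lp ℂ 2 (volume : Measure (Fin n → ℝ)) →L[ℂ] lp (fun _ : (Fin n → ℤ) × I => ℂ) 2)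
    (hA : ∀ f : Lp ℂ 2 (volume : Measure (Fin n → ℝ)), ∀ p : (Fin n → ℤ) × I,
      A f p = ⟪tK p.1 (ψ p.2), f⟫)
    (α β : ℝ) (hα : 0 < α)
    (hstable : ∀ x₁ ∈ ⋃ γ : Γ, (S γ : Set (Lp ℂ 2 (volume : Measure (Fin n → ℝ)))),
      ∀ x₂ ∈ ⋃ γ : Γ, (S γ : Set (Lp ℂ 2 (volume : Measure (Fin n → ℝ)))),
        α * ‖x₁ - x₂‖ ^ 2 ≤ ‖A x₁ - A x₂‖ ^ 2 ∧ ‖A x₁ - A x₂‖ ^ 2 ≤ β * ‖x₁ - x₂‖ ^ 2) :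
    ∀ γ θ : Γ, len ((S γ ⊔ S θ : Submodule ℂ
        (Lp ℂ 2 (volume : Measure (Fin n → ℝ)))).topologicalClosure) ≤ Fintype.card I := by
  intro γ θ
  have hS (ρ : Γ) : IsShiftInvariant (S ρ) := by
    obtain ⟨Φ, -, hΦ⟩ := hFSIS ρ
    exact hΦ ▸ isShiftInvariant_shiftSpace Φ
  have hlower := mul_sq_norm_le_of_mem_closure A.continuous
    (mul_sq_norm_le_of_mem_sup_of_stable A (fun x₁ h₁ x₂ h₂ => (hstable x₁ h₁ x₂ h₂).1) γ θ)
  have hsep : ∀ y ∈ (S γ ⊔ S θ).topologicalClosure,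
      (∀ k i, ⟪tK k (ψ i), y⟫ = 0) → y = 0 := by
    intro y hy hy0
    have hAy : A y = 0 := lp.ext (funext fun p => (hA y p).trans (hy0 p.1 p.2))
    have hy2 : α * ‖y‖ ^ 2 ≤ 0 := by simpa [hAy] using hlower y hy
    simpa using nonpos_of_mul_nonpos_right hy2 hα
  rw [((hS γ).sup (hS θ)).topologicalClosure.eq_shiftSpace_range_starProjection ψ hsep]
  exact len_shiftSpace_range_le _

/-- Let `{S γ}_{γ ∈ Γ}` be a family of finitely generated shift-invariant
subspaces of `L²(ℝⁿ)`, `χ = ⋃ γ, S γ`, and `S̄_{γ,θ}` the closure of `S γ + S θ`.  Let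
`Ψ = {ψ i}_{i ∈ I}` with `I` finite be such that `E(Ψ)` is a Bessel sequence, and
`A f = {⟨f, t_k ψ i⟩}_{i,k}` the associated sampling operator.  If `A` is stable on `χ`, then
`#I ≥ len S̄_{γ,θ}` for every `γ, θ ∈ Γ`. -/
theorem stmt_18 {n : ℕ}
    {Γ : Type*} (S : Γ → Submodule ℂ (Lp ℂ 2 (volume : Measure (Fin n → ℝ))))
    (hFSIS : ∀ γ : Γ, ∃ Φ : Set (Lp ℂ 2 (volume : Measure (Fin n → ℝ))),
      Φ.Finite ∧ S γ = shiftSpace Φ)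
    {I : Type*} [Fintype I]
    (ψ : I → Lp ℂ 2 (volume : Measure (Fin n → ℝ))) (B : ℝ) (hB : 0 < B)
    (hBessel : ∀ h : Lp ℂ 2 (volume : Measure (Fin n → ℝ)),
      ∑' p : (Fin n → ℤ) × I, ‖⟪tK p.1 (ψ p.2), h⟫‖ ^ 2 ≤ B * ‖h‖ ^ 2)
    (A : Lp ℂ 2 (volume : Measure (Fin n → ℝ)) →L[ℂ] lp (fun _ : (Fin n → ℤ) × I => ℂ) 2)
    (hA : ∀ f : Lp ℂ 2 (volume : Measure (Fin n → ℝ)), ∀ p : (Fin n → ℤ) × I,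
      A f p = ⟪tK p.1 (ψ p.2), f⟫)
    (α β : ℝ) (hα : 0 < α) (hαβ : α ≤ β)
    (hstable : ∀ x₁ ∈ ⋃ γ : Γ, (S γ : Set (Lp ℂ 2 (volume : Measure (Fin n → ℝ)))),
      ∀ x₂ ∈ ⋃ γ : Γ, (S γ : Set (Lp ℂ 2 (volume : Measure (Fin n → ℝ)))),
        α * ‖x₁ - x₂‖ ^ 2 ≤ ‖A x₁ - A x₂‖ ^ 2 ∧ ‖A x₁ - A x₂‖ ^ 2 ≤ β * ‖x₁ - x₂‖ ^ 2) :
    ∀ γ θ : Γ, len ((S γ ⊔ S θ : Submodule ℂ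
        (Lp ℂ 2 (volume : Measure (Fin n → ℝ)))).topologicalClosure) ≤ Fintype.card I :=
  stmt_18_general S hFSIS ψ A hA α β hα hstable
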